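/- (Generalized Hadamard method.) Let n ≥ 1, let (H^b)_{b∈[n]} be an n-controlled family of Hadamard matrices of dimension n, and let F and G be Hadamard matrices of dimension n. For a, b ∈ [n], define the n×n matrix U_{(a,b)} with entries (U_{(a,b)})_{c,d} = (1/√n) · H^b_{a,d} · F_{b,c} · G_{c,d} for c, d ∈ [n]. Then (U_{(a,b)})_{(a,b)∈[n]×[n]} is a unitary error basis on ℂ^n. -/

import Mathlib

open scoped ComplexConjugate Matrix

noncomputable section

/-- A (possibly rectangularly-indexed) complex Hadamard matrix: all entries have
modulus 1, and distinct rows are orthogonal, with `∑ k, H i k * conj (H j k) = n·δ_{i,j}`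
where `n` is the dimension (the common cardinality of the row and column index sets). -/
def IsHadamard {R C : Type*} [Fintype R] [Fintype C] [DecidableEq R]
    (H : Matrix R C ℂ) : Prop :=
  Fintype.card R = Fintype.card C ∧
  (∀ i j, ‖H i j‖ = 1) ∧
  (∀ i j, ∑ k, H i k * conj (H j k) = if i = j then (Fintype.card R : ℂ) else 0)

/-- A quantum Latin square of dimension `n`: an `n × n` grid (rows and columns indexed
by `A`, with `|A| = n`) of vectors in `ℂ^n` (coordinates indexed by `X`, `|X| = n`),
such that every row and every column is an orthonormal basis. -/
def IsQLS {A X : Type*} [Fintype A] [Fintype X] [DecidableEq A]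
    (Q : A → A → X → ℂ) : Prop :=
  Fintype.card X = Fintype.card A ∧
  (∀ a b c, ∑ i, conj (Q a b i) * Q a c i = if b = c then 1 else 0) ∧
  (∀ a b c, ∑ i, conj (Q a c i) * Q b c i = if a = b then 1 else 0)

/-- A unitary error basis of dimension `n`: a family of `n²` unitary matrices
(rows indexed by `R`, columns by `C`, both of cardinality `n`; elements indexed by `A`
with `|A| = n²`) that are orthogonal with respect to the trace inner product:
`Tr(U_a† U_b) = n·δ_{a,b}`. -/
def IsUEB {A R C : Type*} [Fintype A] [Fintype R] [Fintype C]
    [DecidableEq A] [DecidableEq R] [DecidableEq C]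
    (U : A → Matrix R C ℂ) : Prop :=
  Fintype.card A = (Fintype.card R) ^ 2 ∧
  (∀ a, U a * (U a)ᴴ = 1 ∧ (U a)ᴴ * U a = 1) ∧
  (∀ a b, Matrix.trace ((U a)ᴴ * U b) = if a = b then (Fintype.card R : ℂ) else 0)

/-!
Write `U_{(a,b)} = n^{-1/2} · diag(F_b) · G · diag(H^b_a)`, where `F_b` and `H^b_a` are rows.
Diagonal matrices with unimodular entries and `n^{-1/2} G` are unitary, hence so is `U_{(a,b)}`.
Since `|G_{c,d}| = 1`, the trace form factorizes:
`Tr(U_{(a,b)}† U_{(a',b')}) = n⁻¹ ⟨F_b, F_{b'}⟩ ⟨H^b_a, H^{b'}_{a'}⟩`,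
and the two Hadamard row orthogonality relations give `n δ_{b,b'} δ_{a,a'}`.
-/

open Matrix hiding IsHadamard

section

variable {ι κ : Type*} [Fintype ι] [Fintype κ] [DecidableEq ι]

lemma diagonal_mem_unitaryGroup {v : ι → ℂ} (hv : ∀ i, ‖v i‖ = 1) :
    diagonal v ∈ unitaryGroup ι ℂ := by
  rw [mem_unitaryGroup_iff, star_eq_conjTranspose, diagonal_conjTranspose, diagonal_mul_diagonal,
    ← diagonal_one]
  congr 1
  funext i
  simp [Complex.mul_conj', hv i]

lemma Complex.star_inv_sqrt_mul_inv_sqrt (n : ℕ) :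
    star ((Real.sqrt n : ℂ))⁻¹ * ((Real.sqrt n : ℂ))⁻¹ = (n : ℂ)⁻¹ := by
  rw [← Complex.ofReal_inv, Complex.star_def, Complex.conj_ofReal, ← Complex.ofReal_mul, ← mul_inv,
    Real.mul_self_sqrt n.cast_nonneg, Complex.ofReal_inv, Complex.ofReal_natCast]

lemma IsHadamard.mul_conjTranspose {H : Matrix ι κ ℂ} (hH : IsHadamard H) :
    H * Hᴴ = (Fintype.card ι : ℂ) • (1 : Matrix ι ι ℂ) := by
  ext i j
  simp only [mul_apply, conjTranspose_apply, Complex.star_def, Matrix.smul_apply, Matrix.one_apply,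
    smul_eq_mul, mul_ite, mul_one, mul_zero, hH.2.2 i j]

lemma IsHadamard.star_dotProduct {H : Matrix ι κ ℂ} (hH : IsHadamard H) (i j : ι) :
    star (H i) ⬝ᵥ H j = if i = j then (Fintype.card ι : ℂ) else 0 := by
  simpa [dotProduct, mul_comm, eq_comm] using hH.2.2 j i

lemma IsHadamard.inv_sqrt_card_smul_mem_unitaryGroup {H : Matrix ι ι ℂ} (hH : IsHadamard H) :
    ((Real.sqrt (Fintype.card ι) : ℂ))⁻¹ • H ∈ unitaryGroup ι ℂ := by
  rcases isEmpty_or_nonempty ι with hι | hι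
  · rw [Subsingleton.elim (_ • H) 1]
    exact one_mem _
  rw [mem_unitaryGroup_iff, star_eq_conjTranspose, conjTranspose_smul, Matrix.smul_mul,
    Matrix.mul_smul, hH.mul_conjTranspose, smul_smul, smul_smul, mul_comm (_)⁻¹,
    Complex.star_inv_sqrt_mul_inv_sqrt, inv_mul_cancel₀ (by simp), one_smul]

lemma trace_conjTranspose_diagonal_mul_mul_diagonal [DecidableEq κ] {G : Matrix ι κ ℂ}
    (hG : ∀ i j, ‖G i j‖ = 1) (f f' : ι → ℂ) (h h' : κ → ℂ) :
    trace ((diagonal f * G * diagonal h)ᴴ * (diagonal f' * G * diagonal h')) =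
      (star f ⬝ᵥ f') * (star h ⬝ᵥ h') := by
  have hGG : ∀ i j, star (G i j) * G i j = 1 := fun i j => by
    simp [Complex.conj_mul', hG i j]
  simp only [trace, diag, mul_apply (M := (_ : Matrix ι κ ℂ)ᴴ), conjTranspose_apply, diagonal_mul,
    mul_diagonal, dotProduct, Finset.sum_mul_sum, star_mul, Pi.star_apply]
  rw [Finset.sum_comm]
  refine Finset.sum_congr rfl fun i _ => Finset.sum_congr rfl fun j _ => ?_
  linear_combination (star (f i) * f' i * (star (h j) * h' j)) * hGG i j

end

theorem generalized_hadamard_method_general (n : ℕ)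
    (H : Fin n → Matrix (Fin n) (Fin n) ℂ)
    (F G : Matrix (Fin n) (Fin n) ℂ)
    (hH : ∀ b, IsHadamard (H b)) (hF : IsHadamard F) (hG : IsHadamard G) :
    IsUEB (fun ab : Fin n × Fin n =>
      Matrix.of fun c d : Fin n =>
        ((Real.sqrt n : ℂ))⁻¹ * H ab.2 ab.1 d * F ab.2 c * G c d) := by
  have hU : (fun ab : Fin n × Fin n =>
      Matrix.of fun c d : Fin n => ((Real.sqrt n : ℂ))⁻¹ * H ab.2 ab.1 d * F ab.2 c * G c d) =
        fun ab => ((Real.sqrt n : ℂ))⁻¹ • (diagonal (F ab.2) * G * diagonal (H ab.2 ab.1)) := by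
    ext ab c d
    simp only [of_apply, Matrix.smul_apply, mul_diagonal, diagonal_mul, smul_eq_mul]
    ring
  rw [hU]
  refine ⟨by simp [sq], fun ⟨a, b⟩ => ?_, fun ⟨a, b⟩ ⟨a', b'⟩ => ?_⟩
  · have hGunitary := hG.inv_sqrt_card_smul_mem_unitaryGroup
    rw [Fintype.card_fin] at hGunitary
    have hUunitary := mul_mem (mul_mem (diagonal_mem_unitaryGroup (hF.2.1 b)) hGunitary)
      (diagonal_mem_unitaryGroup ((hH b).2.1 a))
    rw [Matrix.mul_smul, Matrix.smul_mul] at hUunitary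
    exact ⟨mem_unitaryGroup_iff.mp hUunitary, mem_unitaryGroup_iff'.mp hUunitary⟩
  · have hn : (n : ℂ) ≠ 0 := Nat.cast_ne_zero.mpr a.pos.ne'
    rw [conjTranspose_smul, Matrix.smul_mul, Matrix.mul_smul, smul_smul, trace_smul,
      Complex.star_inv_sqrt_mul_inv_sqrt, trace_conjTranspose_diagonal_mul_mul_diagonal hG.2.1,
      hF.star_dotProduct, Fintype.card_fin, smul_eq_mul]
    by_cases hb : b = b'
    · subst hb
      rw [(hH b).star_dotProduct, Fintype.card_fin]
      by_cases ha : a = a' <;> simp [ha, hn]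
    · simp [hb]

/-- generalized Hadamard method: an n-controlled family of n-dimensional
Hadamard matrices and two n-dimensional Hadamard matrices F, G produce a UEB on ℂ^n with
entries `(U_{(a,b)})_{c,d} = (1/√n) · H^b_{a,d} · F_{b,c} · G_{c,d}`. -/
theorem generalized_hadamard_method (n : ℕ) (hn : 1 ≤ n)
    (H : Fin n → Matrix (Fin n) (Fin n) ℂ)
    (F G : Matrix (Fin n) (Fin n) ℂ)
    (hH : ∀ b, IsHadamard (H b)) (hF : IsHadamard F) (hG : IsHadamard G) :
    IsUEB (fun ab : Fin n × Fin n =>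
      Matrix.of fun c d : Fin n =>
        ((Real.sqrt n : ℂ))⁻¹ * H ab.2 ab.1 d * F ab.2 c * G c d) :=
  generalized_hadamard_method_general n H F G hH hF hG
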